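/- arXiv:1101.1530 — 4 statements merged into one kernel-verified Lean document; each statement's English description precedes it below -/
import Mathlib

section
/- The polynomial p(x) = x^4 + 331531596 x^3 − 429878960946 x^2 + 109873509788637459 x + 20919104368024767633 is irreducible over ℚ. -/
open Polynomial

lemma zmod2_cases (a : ZMod 2) : a = 0 ∨ a = 1 := by revert a; decide

lemma zmod2_ne_zero {a : ZMod 2} (h : a ≠ 0) : a = 1 := by
  rcases zmod2_cases a with h0 | h1
  · exact absurd h0 h
  · exact h1

lemma f2_noroot (x : ZMod 2) : (X ^ 4 + X + 1 : (ZMod 2)[X]).eval x ≠ 0 := by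
  rcases zmod2_cases x with rfl | rfl <;> simp <;> decide

lemma deg1_root {g : (ZMod 2)[X]} (h : g.natDegree = 1) : ∃ x, g.eval x = 0 := by
  have hrep := eq_X_add_C_of_natDegree_le_one (p := g) (by omega)
  have hg0 : g ≠ 0 := fun h0 => by simp [h0] at h
  have hlc : g.coeff 1 ≠ 0 := by
    have := leadingCoeff_ne_zero.mpr hg0
    simpa [leadingCoeff, h] using this
  have hlc1 : g.coeff 1 = 1 := zmod2_ne_zero hlc
  refine ⟨g.coeff 0, ?_⟩
  rw [hrep, hlc1]
  have : ∀ a : ZMod 2, a + a = 0 := by decide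
  simpa using this _

lemma eq_quad_of_natDegree_le_two {R : Type*} [Semiring R] {g : R[X]} (h : g.natDegree ≤ 2) :
    g = C (g.coeff 2) * X ^ 2 + C (g.coeff 1) * X + C (g.coeff 0) := by
  ext n
  rcases n with _ | _ | _ | n
  · simp
  · simp
  · simp
  · have hn : g.natDegree < n + 3 := by omega
    simp [coeff_eq_zero_of_natDegree_lt hn, coeff_C, coeff_X, coeff_X_pow]

lemma quad_rootless {g : (ZMod 2)[X]} (h2 : g.natDegree = 2)
    (hr : ∀ x, g.eval x ≠ 0) : g = X ^ 2 + X + 1 := by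
  have hrep := eq_quad_of_natDegree_le_two (g := g) (by omega)
  have hg0 : g ≠ 0 := fun h0 => by simp [h0] at h2
  have hlc : g.coeff 2 = 1 := by
    apply zmod2_ne_zero
    have := leadingCoeff_ne_zero.mpr hg0
    simpa [leadingCoeff, h2] using this
  have hc0 : g.coeff 0 = 1 := by
    apply zmod2_ne_zero
    intro h0
    exact hr 0 (by rw [hrep]; simp [h0])
  have hc1 : g.coeff 1 = 1 := by
    apply zmod2_ne_zero
    intro h1
    exact hr 1 (by rw [hrep, hlc, hc0, h1]; simp; decide)
  rw [hrep, hlc, hc0, hc1]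
  simp only [map_one, one_mul]

lemma f2_irreducible : Irreducible (X ^ 4 + X + 1 : (ZMod 2)[X]) := by
  set f : (ZMod 2)[X] := X ^ 4 + X + 1 with hf
  have hdeg : f.natDegree = 4 := by
    rw [hf]
    compute_degree!
  constructor
  · intro hu
    have := natDegree_eq_zero_of_isUnit hu
    omega
  · rintro a b hab
    by_contra hcon
    push_neg at hcon
    obtain ⟨ha, hb⟩ := hcon
    have hf0 : f ≠ 0 := fun h0 => by simp [h0] at hdeg
    have ha0 : a ≠ 0 := fun h0 => hf0 (by rw [hab, h0, zero_mul])
    have hb0 : b ≠ 0 := fun h0 => hf0 (by rw [hab, h0, mul_zero])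
    have hsum : a.natDegree + b.natDegree = 4 := by
      rw [← hdeg, hab, natDegree_mul ha0 hb0]
    have unit_of_deg0 : ∀ g : (ZMod 2)[X], g ≠ 0 → g.natDegree = 0 → IsUnit g := by
      intro g hg0 h0
      rw [eq_C_of_natDegree_eq_zero h0]
      apply isUnit_C.mpr
      apply isUnit_iff_ne_zero.mpr
      intro hc
      exact hg0 (by rw [eq_C_of_natDegree_eq_zero h0, hc, map_zero])
    have had : a.natDegree ≠ 0 := fun h0 => ha (unit_of_deg0 a ha0 h0)
    have hbd : b.natDegree ≠ 0 := fun h0 => hb (unit_of_deg0 b hb0 h0)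
    -- no root of f
    have hnr : ∀ x, f.eval x ≠ 0 := f2_noroot
    have hroot1 : ∀ g h : (ZMod 2)[X], f = g * h → g.natDegree = 1 → False := by
      intro g h hgh hg1
      obtain ⟨x, hx⟩ := deg1_root hg1
      exact hnr x (by rw [hgh]; simp [hx])
    have h13 : a.natDegree = 1 ∨ a.natDegree = 2 ∨ a.natDegree = 3 := by omega
    rcases h13 with had | had | had
    · exact hroot1 a b hab had
    · -- both degree 2
      have hbd2 : b.natDegree = 2 := by omega
      have hra : ∀ x, a.eval x ≠ 0 := fun x hx => hnr x (by rw [hab]; simp [hx])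
      have hrb : ∀ x, b.eval x ≠ 0 := fun x hx => hnr x (by rw [hab]; simp [hx])
      have hfa := quad_rootless had hra
      have hfb := quad_rootless hbd2 hrb
      rw [hfa, hfb] at hab
      have h2 : (2 : (ZMod 2)[X]) = 0 := by
        rw [show ((2 : (ZMod 2)[X])) = C 2 from (map_ofNat C 2).symm,
          show ((2 : ZMod 2)) = 0 by decide, map_zero]
      have h3 : (3 : (ZMod 2)[X]) = 1 := by
        rw [show ((3 : (ZMod 2)[X])) = C 3 from (map_ofNat C 3).symm,
          show ((3 : ZMod 2)) = 1 by decide, map_one]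
      have hexp : ((X ^ 2 + X + 1) * (X ^ 2 + X + 1) : (ZMod 2)[X]) = X ^ 4 + X ^ 2 + 1 := by
        have hr : ((X ^ 2 + X + 1) * (X ^ 2 + X + 1) : (ZMod 2)[X])
            = X ^ 4 + 2 * X ^ 3 + 3 * X ^ 2 + 2 * X + 1 := by ring
        rw [hr, h2, h3]
        ring
      rw [hexp] at hab
      have h1 : f.coeff 1 = 1 := by rw [hf]; simp [coeff_one]
      rw [hab] at h1
      simp [coeff_one, coeff_X_pow] at h1
    · exact hroot1 b a (by rw [hab, mul_comm]) (by omega)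

lemma int_irreducible : Irreducible (X ^ 4 + C (331531596 : ℤ) * X ^ 3 - C (429878960946 : ℤ) * X ^ 2
      + C (109873509788637459 : ℤ) * X + C (20919104368024767633 : ℤ)) := by
  set q : ℤ[X] := X ^ 4 + C (331531596 : ℤ) * X ^ 3 - C (429878960946 : ℤ) * X ^ 2
      + C (109873509788637459 : ℤ) * X + C (20919104368024767633 : ℤ) with hq
  have hmon : q.Monic := by
    rw [hq]
    monicity!
  apply hmon.irreducible_of_irreducible_map (Int.castRingHom (ZMod 2))
  have hmap : q.map (Int.castRingHom (ZMod 2)) = X ^ 4 + X + 1 := by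
    rw [hq]
    simp only [Polynomial.map_add, Polynomial.map_sub, Polynomial.map_mul, Polynomial.map_pow,
      Polynomial.map_X, Polynomial.map_C]
    norm_num
    rw [show ((331531596 : ZMod 2)) = 0 by decide,
      show ((429878960946 : ZMod 2)) = 0 by decide,
      show ((109873509788637459 : ZMod 2)) = 1 by decide,
      show ((20919104368024767633 : ZMod 2)) = 1 by decide]
    simp
  rw [hmap]
  exact f2_irreducible

/-- The claimed minimal polynomial of `j((1+i√39)/2)` is irreducible over `ℚ`. -/
theorem quartic_irreducible :
    Irreducible (X ^ 4 + C (331531596 : ℚ) * X ^ 3 - C (429878960946 : ℚ) * X ^ 2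
      + C (109873509788637459 : ℚ) * X + C (20919104368024767633 : ℚ)) := by
  set q : ℤ[X] := X ^ 4 + C (331531596 : ℤ) * X ^ 3 - C (429878960946 : ℤ) * X ^ 2
      + C (109873509788637459 : ℤ) * X + C (20919104368024767633 : ℤ) with hq
  have hmon : q.Monic := by
    rw [hq]
    monicity!
  have hmap : q.map (algebraMap ℤ ℚ) = X ^ 4 + C (331531596 : ℚ) * X ^ 3 - C (429878960946 : ℚ) * X ^ 2
      + C (109873509788637459 : ℚ) * X + C (20919104368024767633 : ℚ) := by
    rw [hq]
    simp only [Polynomial.map_add, Polynomial.map_sub, Polynomial.map_mul, Polynomial.map_pow,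
      Polynomial.map_X, Polynomial.map_C]
    norm_num
  rw [← hmap]
  exact (hmon.irreducible_iff_irreducible_map_fraction_map).mp int_irreducible
end

section
/- The real number α = −(27/2)·(6139474 + 1702799√13 + 147·√(39·(89453213 + 24809858√13))) is a root of the polynomial x^4 + 331531596 x^3 − 429878960946 x^2 + 109873509788637459 x + 20919104368024767633. -/
/-- The explicit radical expression for `j((1+i√39)/2)` is a root of the quartic. -/
theorem radical_expression_is_root :
    let α : ℝ := -(27 / 2) * (6139474 + 1702799 * Real.sqrt 13
      + 147 * Real.sqrt (39 * (89453213 + 24809858 * Real.sqrt 13)))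
    α ^ 4 + 331531596 * α ^ 3 - 429878960946 * α ^ 2
      + 109873509788637459 * α + 20919104368024767633 = 0 := by
  intro α
  set a : ℝ := Real.sqrt 13 with ha_def
  set b : ℝ := Real.sqrt (39 * (89453213 + 24809858 * a)) with hb_def
  have ha0 : (0:ℝ) ≤ 13 := by norm_num
  have ha : a ^ 2 = 13 := Real.sq_sqrt ha0
  have ha_nonneg : 0 ≤ a := Real.sqrt_nonneg _
  have harg : (0:ℝ) ≤ 39 * (89453213 + 24809858 * a) := by positivity
  have hb : b ^ 2 = 39 * (89453213 + 24809858 * a) := Real.sq_sqrt harg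
  show α ^ 4 + 331531596 * α ^ 3 - 429878960946 * α ^ 2
      + 109873509788637459 * α + 20919104368024767633 = 0
  have hα : α = -(27 / 2) * (6139474 + 1702799 * a + 147 * b) := rfl
  rw [hα]
  linear_combination
    ((638906814274239940271626442472723/16 : ℝ)
      + (1390686815395573459810458867/2) * b
      + (48327757521811573301873256087117/4) * a
      + (385711467312475297275884973/4) * a * b
      + (4467953066858609685211426232241/16) * a^2) * ha
    + ((-1731479653862923946140341/16 : ℝ)
      + (248155780267521/16) * b^2
      + (120055838571169761429351/8) * a
      + (2874553840025540757/4) * a * b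
      + (99893620494727566846507/8) * a^2) * hb
end

section
/- Let α = −(27/2)·(6139474 + 1702799√13 + 147·√(39·(89453213 + 24809858√13))). Then α generates a degree-4 extension of ℚ, and the product of α with its Galois conjugates (i.e., the constant term of its minimal polynomial up to sign) has absolute value 3^15·17^3·23^3·29^3. -/
open IntermediateField Polynomial

lemma monic_quad_decomp {K : Type*} [Field K] {p : K[X]} (hm : p.Monic)
    (hd : p.natDegree = 2) : ∃ a b : K, p = X ^ 2 + C a * X + C b := by
  have h1 : (p - X ^ 2).natDegree ≤ 1 := by
    rw [Polynomial.natDegree_le_iff_coeff_eq_zero]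
    intro m hm1
    rcases eq_or_lt_of_le (Nat.succ_le_of_lt hm1) with h | h
    · have hc : p.coeff 2 = 1 := by
        have := hm.coeff_natDegree; rwa [hd] at this
      simp [← h, hc]
    · rw [Polynomial.coeff_sub, Polynomial.coeff_X_pow,
        Polynomial.coeff_eq_zero_of_natDegree_lt (by omega : p.natDegree < m)]
      have : m ≠ 2 := by omega
      simp [this]
  obtain ⟨a, b, hab⟩ := Polynomial.exists_eq_X_add_C_of_natDegree_le_one h1
  exact ⟨a, b, by linear_combination hab⟩

lemma linear_factor_root {K : Type*} [Field K] {f g h : K[X]}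
    (hf : f = g * h) (hg : g.natDegree = 1) : ∃ x, f.IsRoot x := by
  have hg0 : g ≠ 0 := fun hz => by simp [hz] at hg
  have hgc : g.coeff 1 ≠ 0 := by
    rw [← hg]
    exact Polynomial.leadingCoeff_ne_zero.mpr hg0
  refine ⟨-(g.coeff 0) / g.coeff 1, ?_⟩
  have hgx : g = C (g.coeff 1) * X + C (g.coeff 0) := by
    obtain ⟨a, b, hab⟩ := Polynomial.exists_eq_X_add_C_of_natDegree_le_one hg.le
    have ha : g.coeff 1 = a := by rw [hab]; simp
    have hb : g.coeff 0 = b := by rw [hab]; simp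
    rw [ha, hb, hab]
  have hev : g.eval (-(g.coeff 0) / g.coeff 1) = 0 := by
    conv_lhs => rw [hgx]
    simp only [eval_add, eval_mul, eval_C, eval_X]
    rw [← hgx]
    field_simp
    ring
  simp [Polynomial.IsRoot, hf, hev]

lemma irreducible_quartic {K : Type*} [Field K] {f : K[X]}
    (hm : f.Monic) (hd : f.natDegree = 4)
    (h1 : ∀ x : K, ¬ f.IsRoot x)
    (h2 : ∀ a b c d : K, ¬ (a + c = f.coeff 3 ∧ b + d + a * c = f.coeff 2 ∧
         a * d + b * c = f.coeff 1 ∧ b * d = f.coeff 0)) :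
    Irreducible f := by
  constructor
  · exact Polynomial.not_isUnit_of_natDegree_pos f (by omega)
  intro g h hf
  by_contra hc
  push_neg at hc
  obtain ⟨hgu, hhu⟩ := hc
  have hf0 : f ≠ 0 := hm.ne_zero
  have hg0 : g ≠ 0 := fun hg => hf0 (by rw [hf, hg, zero_mul])
  have hh0 : h ≠ 0 := fun hh => hf0 (by rw [hf, hh, mul_zero])
  have hdeg : g.natDegree + h.natDegree = 4 := by
    rw [← Polynomial.natDegree_mul hg0 hh0, ← hf, hd]
  have lb : ∀ p : K[X], p ≠ 0 → ¬ IsUnit p → 1 ≤ p.natDegree := by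
    intro p hp0 hpu
    rcases Nat.eq_zero_or_pos p.natDegree with h0 | h0
    · exfalso
      apply hpu
      rw [Polynomial.eq_C_of_natDegree_eq_zero h0]
      refine Polynomial.isUnit_C.mpr (isUnit_iff_ne_zero.mpr fun hz => hp0 ?_)
      rw [Polynomial.eq_C_of_natDegree_eq_zero h0, hz, map_zero]
    · exact h0
  have hg1 := lb g hg0 hgu
  have hh1 := lb h hh0 hhu
  -- cases on degree of g
  rcases (by omega : g.natDegree = 1 ∨ h.natDegree = 1 ∨
      (g.natDegree = 2 ∧ h.natDegree = 2)) with hcase | hcase | ⟨hgd, hhd⟩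
  · obtain ⟨x, hx⟩ := linear_factor_root hf hcase
    exact h1 x hx
  · obtain ⟨x, hx⟩ := linear_factor_root (hf.trans (mul_comm g h)) hcase
    exact h1 x hx
  · set u := g.leadingCoeff with hu_def
    have hu : u ≠ 0 := Polynomial.leadingCoeff_ne_zero.mpr hg0
    have hlc : g.leadingCoeff * h.leadingCoeff = 1 := by
      rw [← Polynomial.leadingCoeff_mul, ← hf]; exact hm
    have hg' : (C u⁻¹ * g).Monic :=
      Polynomial.monic_C_mul_of_mul_leadingCoeff_eq_one (by field_simp; exact hu_def.symm)
    have hh' : (C u * h).Monic :=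
      Polynomial.monic_C_mul_of_mul_leadingCoeff_eq_one (by
        have : h.leadingCoeff = u⁻¹ := by field_simp; linear_combination hlc
        rw [this]; field_simp)
    have hgd' : (C u⁻¹ * g).natDegree = 2 := by
      rw [Polynomial.natDegree_C_mul (inv_ne_zero hu), hgd]
    have hhd' : (C u * h).natDegree = 2 := by
      rw [Polynomial.natDegree_C_mul hu, hhd]
    obtain ⟨a, b, hab⟩ := monic_quad_decomp hg' hgd'
    obtain ⟨c, d, hcd⟩ := monic_quad_decomp hh' hhd'
    have hff : f = (X ^ 2 + C a * X + C b) * (X ^ 2 + C c * X + C d) := by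
      rw [← hab, ← hcd, hf]
      rw [mul_mul_mul_comm, ← C_mul, inv_mul_cancel₀ hu, C_1, one_mul]
    have hexp : (X ^ 2 + C a * X + C b) * (X ^ 2 + C c * X + C d) =
        X ^ 4 + C (a + c) * X ^ 3 + C (b + d + a * c) * X ^ 2
          + C (a * d + b * c) * X + C (b * d) := by
      simp only [C_add, C_mul]; ring
    rw [hexp] at hff
    refine h2 a b c d ⟨?_, ?_, ?_, ?_⟩ <;>
      rw [hff] <;>
      simp only [Polynomial.coeff_add, Polynomial.coeff_C_mul, Polynomial.coeff_X_pow,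
        Polynomial.coeff_C, Polynomial.coeff_X] <;>
      norm_num

noncomputable def pZ : Polynomial ℤ :=
  X ^ 4 + C 331531596 * X ^ 3 + C (-429878960946) * X ^ 2
    + C 109873509788637459 * X + C 20919104368024767633

lemma pZ_monic : pZ.Monic := by unfold pZ; monicity!

lemma pZ_natDegree : pZ.natDegree = 4 := by unfold pZ; compute_degree!

lemma cast_test : ((331531596 : ℤ) : ZMod 5) = 1 := by decide

lemma pZ_map5 : pZ.map (Int.castRingHom (ZMod 5)) =
    X ^ 4 + C 1 * X ^ 3 + C 4 * X ^ 2 + C 4 * X + C 3 := by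
  unfold pZ
  simp only [Polynomial.map_add, Polynomial.map_mul, Polynomial.map_pow,
    Polynomial.map_X, Polynomial.map_C,
    show (Int.castRingHom (ZMod 5)) 331531596 = 1 by decide,
    show (Int.castRingHom (ZMod 5)) (-429878960946) = 4 by decide,
    show (Int.castRingHom (ZMod 5)) 109873509788637459 = 4 by decide,
    show (Int.castRingHom (ZMod 5)) 20919104368024767633 = 3 by decide]

lemma zmod5_noroot : ∀ y : ZMod 5, ¬ (y ^ 4 + 1 * y ^ 3 + 4 * y ^ 2 + 4 * y + 3 = 0) := by
  decide

lemma zmod5_noquad : ∀ a b c d : ZMod 5,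
    ¬ (a + c = 1 ∧ b + d + a * c = 4 ∧ a * d + b * c = 4 ∧ b * d = 3) := by
  decide

lemma map5_irreducible : Irreducible (pZ.map (Int.castRingHom (ZMod 5))) := by
  haveI : Fact (Nat.Prime 5) := ⟨by norm_num⟩
  rw [pZ_map5]
  have hc3 : (X ^ 4 + C 1 * X ^ 3 + C 4 * X ^ 2 + C 4 * X + C 3 : (ZMod 5)[X]).coeff 3 = 1 := by
    simp only [Polynomial.coeff_add, Polynomial.coeff_C_mul, Polynomial.coeff_X_pow,
      Polynomial.coeff_C, Polynomial.coeff_X]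
    norm_num
  have hc2 : (X ^ 4 + C 1 * X ^ 3 + C 4 * X ^ 2 + C 4 * X + C 3 : (ZMod 5)[X]).coeff 2 = 4 := by
    simp only [Polynomial.coeff_add, Polynomial.coeff_C_mul, Polynomial.coeff_X_pow,
      Polynomial.coeff_C, Polynomial.coeff_X]
    norm_num
  have hc1 : (X ^ 4 + C 1 * X ^ 3 + C 4 * X ^ 2 + C 4 * X + C 3 : (ZMod 5)[X]).coeff 1 = 4 := by
    simp only [Polynomial.coeff_add, Polynomial.coeff_C_mul, Polynomial.coeff_X_pow,
      Polynomial.coeff_C, Polynomial.coeff_X]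
    norm_num
  have hc0 : (X ^ 4 + C 1 * X ^ 3 + C 4 * X ^ 2 + C 4 * X + C 3 : (ZMod 5)[X]).coeff 0 = 3 := by
    simp only [Polynomial.coeff_add, Polynomial.coeff_C_mul, Polynomial.coeff_X_pow,
      Polynomial.coeff_C, Polynomial.coeff_X]
    norm_num
  apply irreducible_quartic
  · monicity!
  · compute_degree!
  · intro x hx
    apply zmod5_noroot x
    simpa [Polynomial.IsRoot, Polynomial.eval_add, Polynomial.eval_mul, Polynomial.eval_pow,
      Polynomial.eval_C, Polynomial.eval_X] using hx
  · simp only [hc3, hc2, hc1, hc0]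
    exact zmod5_noquad

lemma pZ_irreducible : Irreducible pZ := by
  haveI : Fact (Nat.Prime 5) := ⟨by norm_num⟩
  exact pZ_monic.irreducible_of_irreducible_map _ _ map5_irreducible

noncomputable def pQ : Polynomial ℚ := pZ.map (Int.castRingHom ℚ)

lemma pQ_monic : pQ.Monic := pZ_monic.map _

lemma pQ_irreducible : Irreducible pQ :=
  (Polynomial.IsPrimitive.Int.irreducible_iff_irreducible_map_cast
    pZ_monic.isPrimitive).mp pZ_irreducible

lemma pQ_natDegree : pQ.natDegree = 4 := by
  rw [pQ, pZ_monic.natDegree_map, pZ_natDegree]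

lemma pQ_coeff_zero : pQ.coeff 0 = 20919104368024767633 := by
  rw [pQ, Polynomial.coeff_map]
  have : pZ.coeff 0 = 20919104368024767633 := by
    simp only [pZ, Polynomial.coeff_add, Polynomial.coeff_C_mul, Polynomial.coeff_X_pow,
      Polynomial.coeff_C, Polynomial.coeff_X]
    norm_num
  rw [this]
  norm_num

/-- The singular modulus `j((1+i√39)/2)` generates a degree-4 extension of `ℚ`, and the
product of its Galois conjugates (its field norm) has absolute value `3^15·17^3·23^3·29^3`. -/
theorem degree_and_norm_of_singular_modulus :
    let α : ℝ := -(27 / 2) * (6139474 + 1702799 * Real.sqrt 13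
      + 147 * Real.sqrt (39 * (89453213 + 24809858 * Real.sqrt 13)))
    Module.finrank ℚ ℚ⟮α⟯ = 4 ∧
    |Algebra.norm ℚ (IntermediateField.AdjoinSimple.gen ℚ α)| =
      3 ^ 15 * 17 ^ 3 * 23 ^ 3 * 29 ^ 3 := by
  intro α
  have hs0 : (0:ℝ) ≤ 13 := by norm_num
  set s : ℝ := Real.sqrt 13 with hs_def
  have hs : s ^ 2 = 13 := Real.sq_sqrt hs0
  have hsnn : 0 ≤ s := Real.sqrt_nonneg _
  set t : ℝ := Real.sqrt (39 * (89453213 + 24809858 * s)) with ht_def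
  have ht : t ^ 2 = 39 * (89453213 + 24809858 * s) := Real.sq_sqrt (by positivity)
  have hα : α = -(27 / 2) * (6139474 + 1702799 * s + 147 * t) := rfl
  have haevZ : (Polynomial.aeval α) pZ = 0 := by
    simp only [pZ, map_add, map_mul, map_pow, map_intCast, Polynomial.aeval_X,
      Polynomial.aeval_C, algebraMap_int_eq, eq_intCast]
    rw [hα]
    push_cast
    linear_combination
      (638906814274239940271626442472723/16 + (1390686815395573459810458867/2) * t
        + (48327757521811573301873256087117/4) * s + (385711467312475297275884973/4) * s * t
        + (4467953066858609685211426232241/16) * s^2) * hs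
      + ((-1731479653862923946140341/16) + (248155780267521/16) * t^2
        + (120055838571169761429351/8) * s + (2874553840025540757/4) * s * t
        + (99893620494727566846507/8) * s^2) * ht
  have haev : (Polynomial.aeval α) pQ = 0 := by
    rw [pQ, ← algebraMap_int_eq, Polynomial.aeval_map_algebraMap]
    exact haevZ
  have hint : IsIntegral ℚ α := ⟨pQ, pQ_monic, by rwa [← Polynomial.aeval_def]⟩
  have hmin : minpoly ℚ α = pQ :=
    (minpoly.eq_of_irreducible_of_monic pQ_irreducible haev pQ_monic).symm
  constructor
  · rw [IntermediateField.adjoin.finrank hint, hmin, pQ_natDegree]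
  · have hpb := Algebra.PowerBasis.norm_gen_eq_coeff_zero_minpoly
      (IntermediateField.adjoin.powerBasis hint)
    rw [IntermediateField.adjoin.powerBasis_gen] at hpb
    rw [IntermediateField.minpoly_gen, hmin, pQ_coeff_zero] at hpb
    erw [hpb]
    have hdim : (IntermediateField.adjoin.powerBasis hint).dim = 4 := by
      rw [IntermediateField.adjoin.powerBasis_dim, hmin, pQ_natDegree]
    rw [hdim]
    norm_num
end

section
/- The polynomial q(x) = x^3 − (2^2·3^7·31·67·37223·235849)/(17^6·29^6) x^2 + (2^4·3^14·151·1187·163327)/(17^6·29^6) x − (2^6·3^21·19^4)/(17^6·29^6) is irreducible over ℚ. -/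
open Polynomial

private lemma no_int_root (n : ℤ) :
    n ^ 3 - 159511016412629892 * n ^ 2 + 32165085905247934342475481943049904 * n
      - 17984723207696660765098855300088294238404865776832 ≠ 0 := by
  intro h
  have h5 : (n : ZMod 5) ^ 3 - 2 * (n : ZMod 5) ^ 2 + 4 * (n : ZMod 5) - 2 = 0 := by
    have := congrArg (fun z : ℤ => (z : ZMod 5)) h
    push_cast at this
    rw [show (159511016412629892 : ZMod 5) = 2 by decide,
        show (32165085905247934342475481943049904 : ZMod 5) = 4 by decide,
        show (17984723207696660765098855300088294238404865776832 : ZMod 5) = 2 by decide] at this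
    exact this
  exact (by decide : ∀ z : ZMod 5, z ^ 3 - 2 * z ^ 2 + 4 * z - 2 ≠ 0) _ h5

private noncomputable def Pint : ℤ[X] :=
  X ^ 3 - C 159511016412629892 * X ^ 2 + C 32165085905247934342475481943049904 * X
    - C 17984723207696660765098855300088294238404865776832

private lemma Pint_monic : Pint.Monic := by
  unfold Pint
  monicity!

private lemma no_rat_root (r : ℚ)
    (hr : r ^ 3 - ((2 ^ 2 * 3 ^ 7 * 31 * 67 * 37223 * 235849 : ℚ) / (17 ^ 6 * 29 ^ 6)) * r ^ 2
      + ((2 ^ 4 * 3 ^ 14 * 151 * 1187 * 163327 : ℚ) / (17 ^ 6 * 29 ^ 6)) * r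
      - ((2 ^ 6 * 3 ^ 21 * 19 ^ 4 : ℚ) / (17 ^ 6 * 29 ^ 6)) = 0) : False := by
  set y : ℚ := 14357588953446649 * r with hy
  have hyeq : y ^ 3 - 159511016412629892 * y ^ 2 + 32165085905247934342475481943049904 * y
      - 17984723207696660765098855300088294238404865776832 = 0 := by
    rw [hy]
    linear_combination (14357588953446649 : ℚ) ^ 3 * hr
  have haev : aeval y Pint = 0 := by
    simp only [Pint, map_sub, map_add, map_mul, map_pow, aeval_X, aeval_C]
    exact_mod_cast hyeq
  obtain ⟨n, hn⟩ := isInteger_of_is_root_of_monic Pint_monic haev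
  rw [show algebraMap ℤ ℚ n = (n : ℚ) from rfl] at hn
  rw [← hn] at hyeq
  have : n ^ 3 - 159511016412629892 * n ^ 2 + 32165085905247934342475481943049904 * n
      - 17984723207696660765098855300088294238404865776832 = 0 := by exact_mod_cast hyeq
  exact no_int_root n this

/-- The claimed minimal polynomial of the singular modulus `t(s_244)` on the Shimura curve
`X*_6` is irreducible over `ℚ`. -/
theorem cubic_irreducible :
    Irreducible (X ^ 3
      - C ((2 ^ 2 * 3 ^ 7 * 31 * 67 * 37223 * 235849 : ℚ) / (17 ^ 6 * 29 ^ 6)) * X ^ 2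
      + C ((2 ^ 4 * 3 ^ 14 * 151 * 1187 * 163327 : ℚ) / (17 ^ 6 * 29 ^ 6)) * X
      - C ((2 ^ 6 * 3 ^ 21 * 19 ^ 4 : ℚ) / (17 ^ 6 * 29 ^ 6))) := by
  set q : ℚ[X] := X ^ 3
      - C ((2 ^ 2 * 3 ^ 7 * 31 * 67 * 37223 * 235849 : ℚ) / (17 ^ 6 * 29 ^ 6)) * X ^ 2
      + C ((2 ^ 4 * 3 ^ 14 * 151 * 1187 * 163327 : ℚ) / (17 ^ 6 * 29 ^ 6)) * X
      - C ((2 ^ 6 * 3 ^ 21 * 19 ^ 4 : ℚ) / (17 ^ 6 * 29 ^ 6)) with hq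
  have hdeg : q.natDegree = 3 := by
    rw [hq]
    compute_degree!
  have hq0 : q ≠ 0 := fun h => by simp [h] at hdeg
  rw [irreducible_iff_roots_eq_zero_of_degree_le_three (by omega) (by omega)]
  rw [Multiset.eq_zero_iff_forall_notMem]
  intro r hr
  rw [mem_roots hq0] at hr
  have : eval r q = 0 := hr
  rw [hq] at this
  simp only [eval_sub, eval_add, eval_mul, eval_pow, eval_X, eval_C] at this
  exact no_rat_root r this
end
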